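/- arXiv:1511.07070 — 2 statements merged into one kernel-verified Lean document; each statement's English description precedes it below -/
import Mathlib

section
/- For vectors a, b ∈ {0,1}^d, the string VG'(b) = b₁b₂…b_d can be derived from the regular expression VG(a) = CG(a₁)CG(a₂)…CG(a_d) if and only if the dot product a·b = Σⱼ aⱼbⱼ equals 0, where CG(0) = (0|1) and CG(1) = 0. -/
open RegularExpression

/-- Coordinate gadget: `CG 0 = (0|1)`, `CG 1 = 0`. Bits are `Bool` (false = 0, true = 1). -/
def CG : Bool → RegularExpression Bool
  | false => char false + char true
  | true  => char false

/-- Pattern vector gadget: concatenation of the coordinate gadgets. -/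
def VG {d : ℕ} (a : Fin d → Bool) : RegularExpression Bool :=
  (List.ofFn fun j => CG (a j)).prod

/-- Text vector gadget: the string of the bits of `b`. -/
def VG' {d : ℕ} (b : Fin d → Bool) : List Bool :=
  List.ofFn fun j => b j

namespace RegularExpression

variable {α : Type*}

theorem ofFn_mem_matches'_prod_ofFn {d : ℕ} (R : Fin d → RegularExpression α)
    (P : Fin d → α → Prop) (hR : ∀ j s, s ∈ (R j).matches' ↔ ∃ c, s = [c] ∧ P j c)
    (w : Fin d → α) :
    List.ofFn w ∈ (List.ofFn R).prod.matches' ↔ ∀ j, P j (w j) := by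
  induction d with
  | zero => simp [matches'_epsilon]
  | succ n ih =>
    have ih' := ih (fun j => R j.succ) (fun j => P j.succ) (fun j => hR j.succ) (fun j => w j.succ)
    simp only [List.ofFn_succ, List.prod_cons, matches'_mul, Language.mem_mul, hR,
      Fin.forall_fin_succ, ← ih']
    constructor
    · rintro ⟨_, ⟨c, rfl, hc⟩, t, ht, hct⟩
      obtain ⟨rfl, rfl⟩ := List.cons_eq_cons.mp hct
      exact ⟨hc, ht⟩
    · rintro ⟨hc, ht⟩
      exact ⟨_, ⟨w 0, rfl, hc⟩, _, ht, rfl⟩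

end RegularExpression

theorem mem_matches'_CG (x : Bool) (s : List Bool) :
    s ∈ (CG x).matches' ↔ ∃ c, s = [c] ∧ (x && c) = false := by
  cases x <;> simp [CG, matches'_add, Language.mem_add] <;> rfl

theorem stmt1 {d : ℕ} (a b : Fin d → Bool) :
    VG' b ∈ (VG a).matches' ↔ ∀ j, (a j && b j) = false :=
  ofFn_mem_matches'_prod_ofFn _ _ (fun j => mem_matches'_CG (a j)) b
end

section
/- Let p be a regular expression over an alphabet Σ and t a string over Σ. Let x ∈ Σ be a symbol occurring neither in p nor in t. Then the string x t x can be derived from the regular expression (x ∘ p ∘ x)* if and only if t can be derived from p. -/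
/-! Every block of a word of `(x p x)*` carries exactly two copies of the fresh symbol `x`, and so
does `x t x`; counting occurrences of `x` therefore forces a single block `x u x` with `u = t`. -/

open RegularExpression

def occurs {α : Type*} (x : α) : RegularExpression α → Prop
  | .zero => False
  | .epsilon => False
  | .char a => a = x
  | .plus p q => occurs x p ∨ occurs x q
  | .comp p q => occurs x p ∨ occurs x q
  | .star p => occurs x p

open Computability

section

variable {α : Type*}

theorem not_mem_of_mem_matches'_of_not_occurs {x : α} {p : RegularExpression α}
    (hxp : ¬ occurs x p) {u : List α} (hu : u ∈ p.matches') : x ∉ u := by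
  induction p generalizing u with
  | zero => exact hu.elim
  | epsilon => rw [show u = [] from hu]; simp
  | char a =>
    rw [show u = [a] from hu, List.mem_singleton]
    exact fun h => hxp h.symm
  | plus q r ihq ihr =>
    simp only [occurs, not_or] at hxp
    exact hu.elim (ihq hxp.1) (ihr hxp.2)
  | comp q r ihq ihr =>
    simp only [occurs, not_or] at hxp
    obtain ⟨a, ha, b, hb, rfl⟩ := Language.mem_mul.1 hu
    simpa using ⟨ihq hxp.1 ha, ihr hxp.2 hb⟩
  | star q ih =>
    obtain ⟨L, rfl, hL⟩ := Language.mem_kstar.1 hu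
    simpa using fun l hl => ih hxp (hL l hl)

theorem mem_matches'_char_mul_mul_char {x : α} {p : RegularExpression α} {s : List α} :
    s ∈ (char x * p * char x).matches' ↔ ∃ u ∈ p.matches', s = [x] ++ u ++ [x] := by
  simp only [matches'_mul, matches'_char, Language.mem_mul]
  constructor
  · rintro ⟨_, ⟨_, rfl, u, hu, rfl⟩, _, rfl, rfl⟩
    exact ⟨u, hu, rfl⟩
  · rintro ⟨u, hu, rfl⟩
    exact ⟨_, ⟨_, rfl, u, hu, rfl⟩, _, rfl, rfl⟩

theorem Language.mem_of_mem_kstar_of_count_eq [DecidableEq α] {l : Language α} {x : α} {n : ℕ}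
    (hn : 0 < n) (hl : ∀ u ∈ l, u.count x = n) {w : List α} (hw : w ∈ l∗)
    (hwx : w.count x = n) : w ∈ l := by
  obtain ⟨L, rfl, hL⟩ := Language.mem_kstar.1 hw
  have hsum : L.flatten.count x = L.length * n := by
    rw [List.count_flatten, List.map_congr_left fun v hv => hl v (hL v hv), List.map_const',
      List.sum_replicate, smul_eq_mul]
  obtain ⟨v, rfl⟩ : ∃ v, L = [v] := List.length_eq_one_iff.1 (by
    rw [hwx] at hsum
    exact (Nat.mul_eq_right hn.ne').1 hsum.symm)
  simpa using hL v (by simp)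

end

theorem stmt10 {α : Type*} (p : RegularExpression α) (t : List α) (x : α)
    (hxt : x ∉ t) (hxp : ¬ occurs x p) :
    ([x] ++ t ++ [x]) ∈ ((char x * p * char x).star).matches' ↔ t ∈ p.matches' := by
  classical
  have hcount : ∀ u, x ∉ u → ([x] ++ u ++ [x]).count x = 2 := fun u hu => by
    simp [List.count_append, List.count_eq_zero_of_not_mem hu]
  have hblocks : ∀ s ∈ (char x * p * char x).matches', s.count x = 2 := fun s hs => by
    obtain ⟨u, hu, rfl⟩ := mem_matches'_char_mul_mul_char.1 hs
    exact hcount u (not_mem_of_mem_matches'_of_not_occurs hxp hu)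
  rw [matches'_star]
  constructor
  · intro h
    obtain ⟨u, hu, htu⟩ := mem_matches'_char_mul_mul_char.1
      (Language.mem_of_mem_kstar_of_count_eq two_pos hblocks h (hcount t hxt))
    obtain rfl : t = u := by simpa using htu
    exact hu
  · intro ht
    exact Language.mem_kstar.2
      ⟨[[x] ++ t ++ [x]], by simp, by simpa using mem_matches'_char_mul_mul_char.2 ⟨t, ht, rfl⟩⟩
end
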